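/- The second moment of the symmetric generalized binomial distribution is ∑_{k=0}^n k² 𝔭_k^{(n)}(η) = η n² + η(η−1) c_n, and hence the variance is η(1−η)(n² − c_n), where c_n is defined by t² N'(t)²/N(t)² · N(t) = ∑_{n} c_n t^n/x_n!, i.e., t² N'(t)²/N(t) = ∑_{n≥0} (c_n/x_n!) t^n. -/

import Mathlib

open PowerSeries Finset

/-- Formal exponential of a power series (intended for series with zero constant term):
coefficientwise `exp F = ∑_k F^k / k!`, which is a finite sum in each coefficient. -/
noncomputable def expS (F : PowerSeries ℝ) : PowerSeries ℝ :=
  PowerSeries.mk fun n => ∑ k ∈ Finset.range (n + 1),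
    (1 / (k.factorial : ℝ)) * PowerSeries.coeff n (F ^ k)

/-- Formal logarithm of a power series (intended for series with constant term 1):
coefficientwise `log N = ∑_{k≥1} (-1)^{k+1} (N-1)^k / k`. -/
noncomputable def logS (N : PowerSeries ℝ) : PowerSeries ℝ :=
  PowerSeries.mk fun n => ∑ k ∈ Finset.range (n + 1),
    ((-1 : ℝ) ^ (k + 1) / (k : ℝ)) * PowerSeries.coeff n ((N - 1) ^ k)

/-- The formal power `N^η := exp (η · log N)`. -/
noncomputable def powS (N : PowerSeries ℝ) (η : ℝ) : PowerSeries ℝ :=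
  expS (η • logS N)

/-- Deformed factorial `x_n! = x_1 x_2 ⋯ x_n`, with `x_0! = 1`. -/
noncomputable def xfac (x : ℕ → ℝ) (n : ℕ) : ℝ := ∏ k ∈ Finset.Icc 1 n, x k

/-! The probabilities factor as `𝔭ₖ⁽ⁿ⁾(η) = xₙ! [tᵏ] N^η · [tⁿ⁻ᵏ] N^(1-η)`, so with the Euler
operator `θ = t d/dt` (which multiplies the `k`-th coefficient by `k`) the `j`-th moment is
`xₙ! [tⁿ] (θʲ N^η · N^(1-η))`. Differentiating `N^η = exp (η log N)` gives `N θ N^η = η θN N^η`,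
and a Wronskian argument gives `N^η N^(1-η) = N`. Hence `θ N^η · N^(1-η) = η θN` and, applying
`θ` once more, `θ² N^η · N^(1-η) = η θ²N + η(η-1) (θN)² / N`. Since `[tⁿ] θʲ N = nʲ / xₙ!`, the
two moments are `η n` and `η n² + η(η-1) cₙ`. -/

namespace PowerSeries

theorem coeff_subst_eq_sum_range {R : Type*} [CommRing R] {F : R⟦X⟧}
    (hF : constantCoeff F = 0) (f : R⟦X⟧) (n : ℕ) :
    coeff n (f.subst F) = ∑ d ∈ range (n + 1), coeff d f * coeff n (F ^ d) := by
  rw [coeff_subst' (HasSubst.of_constantCoeff_zero' hF),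
    finsum_eq_sum_of_support_subset (s := range (n + 1))]
  · simp only [smul_eq_mul]
  intro d hd
  by_contra hdn
  refine hd (smul_eq_zero_of_right _ (coeff_of_lt_order _ ?_))
  exact lt_of_lt_of_le (by simp_all) (le_order_pow_of_constantCoeff_eq_zero d hF)

theorem mk_neg_one_pow_mul_one_add_X {R : Type*} [CommRing R] :
    (mk fun n => (-1 : R) ^ n) * (1 + X) = 1 := by
  ext (_ | n) <;> simp [mul_add, coeff_succ_mul_X, pow_succ]

/-- The quotient `A / B` has derivative `(B A' - A B') / B² = 0`. -/
theorem eq_of_mul_derivative_eq {K : Type*} [Field K] [CharZero K] {A B : K⟦X⟧}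
    (hB : constantCoeff B ≠ 0) (h : B * d⁄dX K A = A * d⁄dX K B)
    (h0 : constantCoeff A = constantCoeff B) : A = B := by
  have hinv : B⁻¹ * B = 1 := PowerSeries.inv_mul_cancel B hB
  have hquot : A * B⁻¹ = 1 := by
    refine derivative.ext ?_ (by simp [h0, hB])
    rw [Derivation.leibniz, derivative_inv', Derivation.map_one_eq_zero, smul_eq_mul, smul_eq_mul]
    linear_combination B⁻¹ ^ 2 * h - (B⁻¹ * d⁄dX K A) * hinv
  calc A = A * B⁻¹ * B := by rw [mul_assoc, hinv, mul_one]
    _ = B := by rw [hquot, one_mul]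

variable (R : Type*) [CommRing R]

noncomputable def eulerOperator : Derivation R R⟦X⟧ R⟦X⟧ := (X : R⟦X⟧) • d⁄dX R

variable {R}

theorem eulerOperator_apply (f : R⟦X⟧) : eulerOperator R f = X * d⁄dX R f := rfl

theorem coeff_eulerOperator (f : R⟦X⟧) (n : ℕ) :
    coeff n (eulerOperator R f) = n * coeff n f := by
  rcases n with _ | n
  · simp [eulerOperator_apply]
  · rw [eulerOperator_apply, coeff_succ_X_mul, coeff_derivative]
    push_cast
    ring

theorem coeff_eulerOperator_iterate (f : R⟦X⟧) (j n : ℕ) :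
    coeff n ((eulerOperator R)^[j] f) = n ^ j * coeff n f := by
  induction j with
  | zero => simp
  | succ j ih => rw [Function.iterate_succ_apply', coeff_eulerOperator, ih]; ring

theorem sum_pow_mul_coeff_mul_coeff (A B : R⟦X⟧) (j n : ℕ) :
    ∑ k ∈ range (n + 1), (k : R) ^ j * (coeff k A * coeff (n - k) B) =
      coeff n ((eulerOperator R)^[j] A * B) := by
  rw [coeff_mul, Nat.sum_antidiagonal_eq_sum_range_succ
    (fun i l => coeff i ((eulerOperator R)^[j] A) * coeff l B)]
  exact sum_congr rfl fun k _ => by rw [coeff_eulerOperator_iterate, mul_assoc]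

end PowerSeries

theorem expS_eq_subst {F : ℝ⟦X⟧} (hF : constantCoeff F = 0) : expS F = (exp ℝ).subst F := by
  ext n
  rw [expS, coeff_mk, coeff_subst_eq_sum_range hF]
  simp

theorem logS_eq_logOf {N : ℝ⟦X⟧} (hN : constantCoeff N = 1) : logS N = logOf N := by
  ext n
  rw [logS, coeff_mk, logOf_eq, coeff_subst_eq_sum_range (by simp [hN])]
  -- the `d = 0` term of `logS` vanishes only because `(-1) / 0 = 0`
  refine sum_congr rfl fun d _ => ?_
  rcases eq_or_ne d 0 with rfl | hd <;> simp [*]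

theorem derivative_expS {F : ℝ⟦X⟧} (hF : constantCoeff F = 0) :
    d⁄dX ℝ (expS F) = expS F * d⁄dX ℝ F := by
  rw [expS_eq_subst hF, derivative_subst (HasSubst.of_constantCoeff_zero' hF), derivative_exp]

theorem mul_derivative_logS {N : ℝ⟦X⟧} (hN : constantCoeff N = 1) :
    N * d⁄dX ℝ (logS N) = d⁄dX ℝ N := by
  have hG : HasSubst (N - 1) := HasSubst.of_constantCoeff_zero' (by simp [hN])
  have h := congrArg (substAlgHom hG) (mk_neg_one_pow_mul_one_add_X (R := ℝ))
  simp only [map_mul, map_add, map_one, substAlgHom_X, coe_substAlgHom] at h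
  rw [logS_eq_logOf hN, logOf_eq, derivative_subst hG, deriv_log, map_sub,
    Derivation.map_one_eq_zero, sub_zero]
  simp only [map_pow, map_neg, map_one]
  linear_combination (d⁄dX ℝ N) * h

theorem constantCoeff_powS (N : ℝ⟦X⟧) (η : ℝ) : constantCoeff (powS N η) = 1 := by
  simp [powS, expS]

theorem mul_derivative_powS {N : ℝ⟦X⟧} (hN : constantCoeff N = 1) (η : ℝ) :
    N * d⁄dX ℝ (powS N η) = C η * (powS N η * d⁄dX ℝ N) := by
  have hF : constantCoeff (η • logS N) = 0 := by
    rw [smul_eq_C_mul, map_mul, logS_eq_logOf hN, constantCoeff_logOf hN, mul_zero]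
  rw [powS, derivative_expS hF, Derivation.map_smul, smul_eq_C_mul (d⁄dX ℝ (logS N))]
  linear_combination C η * expS (η • logS N) * mul_derivative_logS hN

theorem powS_mul_powS_one_sub {N : ℝ⟦X⟧} (hN : constantCoeff N = 1) (η : ℝ) :
    powS N η * powS N (1 - η) = N := by
  refine eq_of_mul_derivative_eq (by simp [hN]) ?_ (by simp [constantCoeff_powS, hN])
  have hC : C η + C (1 - η) = 1 := by rw [← map_add, add_sub_cancel, map_one]
  rw [Derivation.leibniz, smul_eq_mul, smul_eq_mul]
  linear_combination powS N η * mul_derivative_powS hN (1 - η) +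
    powS N (1 - η) * mul_derivative_powS hN η +
    (powS N η * powS N (1 - η) * d⁄dX ℝ N) * hC

local notation "θ" => eulerOperator ℝ

section

variable {N : ℝ⟦X⟧} (hN : constantCoeff N = 1) (η : ℝ)
include hN

theorem mul_eulerOperator_powS : N * θ (powS N η) = C η * (powS N η * θ N) := by
  rw [eulerOperator_apply, eulerOperator_apply]
  linear_combination X * mul_derivative_powS hN η

theorem eulerOperator_powS_mul_powS_one_sub : θ (powS N η) * powS N (1 - η) = C η * θ N := by
  refine mul_left_cancel₀ (a := N) (fun h => by simp [h] at hN) ?_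
  linear_combination powS N (1 - η) * mul_eulerOperator_powS hN η +
    (C η * θ N) * powS_mul_powS_one_sub hN η

theorem eulerOperator_eulerOperator_powS_mul_powS_one_sub :
    θ (θ (powS N η)) * powS N (1 - η) =
      C η * θ (θ N) + C (η * (η - 1)) * (θ N ^ 2 * N⁻¹) := by
  have hinv : N⁻¹ * N = 1 := PowerSeries.inv_mul_cancel N (by simp [hN])
  have hθ := congrArg θ (mul_eulerOperator_powS hN η)
  rw [Derivation.leibniz, Derivation.leibniz, Derivation.leibniz, eulerOperator_apply (C η),
    derivative_C] at hθ
  simp only [smul_eq_mul] at hθ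
  refine mul_left_cancel₀ (a := N) (fun h => by simp [h] at hN) ?_
  rw [map_mul, map_sub, map_one]
  linear_combination powS N (1 - η) * hθ +
    ((C η - 1) * θ N) * eulerOperator_powS_mul_powS_one_sub hN η +
    (C η * θ (θ N)) * powS_mul_powS_one_sub hN η - ((C η * (C η - 1)) * θ N ^ 2) * hinv

end

theorem xfac_pos {x : ℕ → ℝ} (hx : ∀ n, 1 ≤ n → 0 < x n) (n : ℕ) : 0 < xfac x n :=
  prod_pos fun k hk => hx k (mem_Icc.mp hk).1

theorem stmt10 (x : ℕ → ℝ) (hx : ∀ n, 1 ≤ n → 0 < x n)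
    (N : PowerSeries ℝ) (hN : N = PowerSeries.mk fun n => 1 / xfac x n)
    (q : ℕ → ℝ → ℝ)
    (hq : ∀ n η, q n η = xfac x n * PowerSeries.coeff n (powS N η))
    (p : ℕ → ℕ → ℝ → ℝ)
    (hp : ∀ n k η, p n k η =
      (xfac x n / (xfac x (n - k) * xfac x k)) * q k η * q (n - k) (1 - η))
    (c : ℕ → ℝ)
    (hc : ∀ n, c n = xfac x n *
      PowerSeries.coeff n (PowerSeries.X ^ 2 * N.derivativeFun ^ 2 * N⁻¹)) :
    ∀ (n : ℕ) (η : ℝ),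
      (∑ k ∈ Finset.range (n + 1), (k : ℝ) ^ 2 * p n k η
        = η * n ^ 2 + η * (η - 1) * c n) ∧
      (∑ k ∈ Finset.range (n + 1), (k : ℝ) ^ 2 * p n k η)
        - (∑ k ∈ Finset.range (n + 1), (k : ℝ) * p n k η) ^ 2
        = η * (1 - η) * (n ^ 2 - c n) := by
  intro n η
  have hxfac (m : ℕ) : xfac x m ≠ 0 := (xfac_pos hx m).ne'
  have hN1 : constantCoeff N = 1 := by simp [hN, xfac]
  have hcoeffN : coeff n N = 1 / xfac x n := by rw [hN, coeff_mk]
  have hmoment (j : ℕ) : ∑ k ∈ range (n + 1), (k : ℝ) ^ j * p n k η =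
      xfac x n * coeff n (θ^[j] (powS N η) * powS N (1 - η)) := by
    rw [← sum_pow_mul_coeff_mul_coeff, mul_sum]
    refine sum_congr rfl fun k _ => ?_
    rw [hp, hq, hq]
    field_simp [hxfac k, hxfac (n - k)]
  have hmean : ∑ k ∈ range (n + 1), (k : ℝ) * p n k η = η * n := by
    have h := hmoment 1
    simp only [pow_one, Function.iterate_one] at h
    rw [h, eulerOperator_powS_mul_powS_one_sub hN1, coeff_C_mul, coeff_eulerOperator, hcoeffN]
    field_simp [hxfac n]
  have hsecond : ∑ k ∈ range (n + 1), (k : ℝ) ^ 2 * p n k η = η * n ^ 2 + η * (η - 1) * c n := by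
    have hc' : c n = xfac x n * coeff n (θ N ^ 2 * N⁻¹) := by
      -- `derivativeFun` is the bare function underlying the derivation `d⁄dX ℝ`
      rw [hc, eulerOperator_apply, mul_pow]; rfl
    rw [hmoment 2, Function.iterate_succ_apply', Function.iterate_one,
      eulerOperator_eulerOperator_powS_mul_powS_one_sub hN1, map_add, coeff_C_mul, coeff_C_mul,
      coeff_eulerOperator, coeff_eulerOperator, hcoeffN, hc']
    field_simp [hxfac n]
  exact ⟨hsecond, by rw [hsecond, hmean]; ring⟩
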